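/- arXiv:1911.00217 — 9 statements merged into one kernel-verified Lean document; each statement's English description precedes it below -/
import Mathlib

section
/- Let μ be a probability mass function on a finite set X, let O ⊆ X be a nonempty subset with p = ∑_{x∈O} μ(x) > 0, and let μ_O be the conditional distribution μ_O(x) = μ(x)/p for x ∈ O and 0 otherwise. Then for every probability mass function σ supported in O, the squared Hellinger distance satisfies the Pythagorean relation D₂(μ‖σ) = D₂(μ‖μ_O) + √p · D₂(μ_O‖σ). -/
open Finset

noncomputable def D2 {X : Type*} [Fintype X] (a b : X → ℝ) : ℝ :=
  1 - ∑ x, Real.sqrt (a x * b x)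

theorem hellinger_pythagorean {X : Type*} [Fintype X] [DecidableEq X]
    (μ σ : X → ℝ) (O : Finset X) (hOne : O.Nonempty)
    (hμ0 : ∀ x, 0 ≤ μ x) (hμ1 : ∑ x, μ x = 1)
    (p : ℝ) (hp : p = ∑ x ∈ O, μ x) (hppos : 0 < p)
    (μO : X → ℝ) (hμO : ∀ x, μO x = if x ∈ O then μ x / p else 0)
    (hσ0 : ∀ x, 0 ≤ σ x) (hσ1 : ∑ x, σ x = 1)
    (hσsupp : ∀ x ∉ O, σ x = 0) :
    D2 μ σ = D2 μ μO + Real.sqrt p * D2 μO σ := by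
  have h1 : ∑ x, Real.sqrt (μ x * μO x) = Real.sqrt p := by
    rw [← Finset.sum_subset (Finset.subset_univ O) (by
      intro x _ hx
      rw [hμO x, if_neg hx, mul_zero, Real.sqrt_zero])]
    have : ∀ x ∈ O, Real.sqrt (μ x * μO x) = μ x / Real.sqrt p := by
      intro x hx
      rw [hμO x, if_pos hx, ← mul_div_assoc, Real.sqrt_div (mul_nonneg (hμ0 x) (hμ0 x)),
        Real.sqrt_mul_self (hμ0 x)]
    rw [Finset.sum_congr rfl this, ← Finset.sum_div, ← hp, Real.div_sqrt]
  have h2 : ∑ x, Real.sqrt (μ x * σ x) = Real.sqrt p * ∑ x, Real.sqrt (μO x * σ x) := by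
    rw [Finset.mul_sum]
    refine Finset.sum_congr rfl fun x _ => ?_
    by_cases hx : x ∈ O
    · rw [hμO x, if_pos hx, ← Real.sqrt_mul hppos.le, ← mul_assoc,
        mul_div_cancel₀ _ hppos.ne']
    · rw [hσsupp x hx, mul_zero, mul_zero, Real.sqrt_zero, mul_zero]
  simp only [D2, h1, h2]
  ring
end

section
/- Let μ be a probability mass function on a finite set X, O ⊆ X nonempty with p = ∑_{x∈O} μ(x), μ_O the conditional distribution of μ on O, ρ_O the uniform distribution on O, and ν = p·μ_O + (1−p)·ρ_O. Then for every probability mass function σ supported in O, the quadratic Bregman divergence D(a‖b) = (1/2)∑_x (a(x)−b(x))² satisfies the Pythagorean relation D(μ‖σ) = D(μ‖ν) + D(ν‖σ). -/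
open Finset

noncomputable def Breg {X : Type*} [Fintype X] (a b : X → ℝ) : ℝ :=
  (1/2) * ∑ x, (a x - b x)^2

/-!
On `O` the mixture `ν` is `μ` shifted by the constant `(1 - p) / |O|`, and outside `O` both `ν`
and `σ` vanish. Hence the cross term `∑ (μ - ν)(ν - σ)` of the expansion of `‖μ - σ‖²` is that
constant times `∑_O ν - ∑_O σ = 1 - 1`.
-/

section Bregman

variable {X : Type*} [Fintype X]

theorem Breg_eq_add_add_sum_mul (a b c : X → ℝ) :
    Breg a c = Breg a b + Breg b c + ∑ x, (a x - b x) * (b x - c x) := by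
  simp only [Breg, ← mul_add, ← sum_add_distrib, mul_sum]
  exact sum_congr rfl fun x _ => by ring

theorem Breg_eq_add_of_sub_eq_const_on {a b c : X → ℝ} (s : Finset X) (k : ℝ)
    (hconst : ∀ x ∈ s, a x - b x = k) (hout : ∀ x ∉ s, b x = c x)
    (hsum : ∑ x ∈ s, b x = ∑ x ∈ s, c x) :
    Breg a c = Breg a b + Breg b c := by
  have hcross : ∑ x, (a x - b x) * (b x - c x) = 0 := calc
    ∑ x, (a x - b x) * (b x - c x) = ∑ x ∈ s, (a x - b x) * (b x - c x) :=
      (sum_subset (subset_univ s) fun x _ hx => by rw [hout x hx, sub_self, mul_zero]).symm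
    _ = k * (∑ x ∈ s, b x - ∑ x ∈ s, c x) := by
      rw [← sum_sub_distrib, mul_sum]
      exact sum_congr rfl fun x hx => by rw [hconst x hx]
    _ = 0 := by rw [hsum, sub_self, mul_zero]
  rw [Breg_eq_add_add_sum_mul a b c, hcross, add_zero]

end Bregman

theorem bregman_pythagorean_general {X : Type*} [Fintype X] [DecidableEq X]
    (μ σ : X → ℝ) (O : Finset X) (hOne : O.Nonempty)
    (p : ℝ) (hp : p = ∑ x ∈ O, μ x) (hppos : 0 < p)
    (μO ρO ν : X → ℝ)
    (hμO : ∀ x, μO x = if x ∈ O then μ x / p else 0)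
    (hρO : ∀ x, ρO x = if x ∈ O then 1 / (O.card : ℝ) else 0)
    (hν : ∀ x, ν x = p * μO x + (1 - p) * ρO x)
    (hσ1 : ∑ x, σ x = 1)
    (hσsupp : ∀ x ∉ O, σ x = 0) :
    Breg μ σ = Breg μ ν + Breg ν σ := by
  have hcard : (O.card : ℝ) ≠ 0 := Nat.cast_ne_zero.mpr hOne.card_pos.ne'
  have hνO : ∀ x ∈ O, ν x = μ x + (1 - p) / O.card := fun x hx => by
    rw [hν, hμO, hρO, if_pos hx, if_pos hx]
    field_simp
  have hνout : ∀ x ∉ O, ν x = σ x := fun x hx => by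
    rw [hν, hμO, hρO, if_neg hx, if_neg hx, hσsupp x hx]
    ring
  have hνsum : ∑ x ∈ O, ν x = 1 := by
    rw [sum_congr rfl hνO, sum_add_distrib, ← hp, sum_const, nsmul_eq_mul]
    field_simp
    ring
  have hσsum : ∑ x ∈ O, σ x = 1 :=
    hσ1 ▸ sum_subset (subset_univ O) fun x _ hx => hσsupp x hx
  refine Breg_eq_add_of_sub_eq_const_on O (-((1 - p) / O.card)) (fun x hx => ?_) hνout
    (hνsum.trans hσsum.symm)
  rw [hνO x hx]
  ring

theorem bregman_pythagorean {X : Type*} [Fintype X] [DecidableEq X]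
    (μ σ : X → ℝ) (O : Finset X) (hOne : O.Nonempty)
    (hμ0 : ∀ x, 0 ≤ μ x) (hμ1 : ∑ x, μ x = 1)
    (p : ℝ) (hp : p = ∑ x ∈ O, μ x) (hppos : 0 < p)
    (μO ρO ν : X → ℝ)
    (hμO : ∀ x, μO x = if x ∈ O then μ x / p else 0)
    (hρO : ∀ x, ρO x = if x ∈ O then 1 / (O.card : ℝ) else 0)
    (hν : ∀ x, ν x = p * μO x + (1 - p) * ρO x)
    (hσ0 : ∀ x, 0 ≤ σ x) (hσ1 : ∑ x, σ x = 1)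
    (hσsupp : ∀ x ∉ O, σ x = 0) :
    Breg μ σ = Breg μ ν + Breg ν σ :=
  bregman_pythagorean_general μ σ O hOne p hp hppos μO ρO ν hμO hρO hν hσ1 hσsupp
end

section
/- Let (O_i)_{i=1}^n be a partition of a finite set X, μ a probability mass function on X with p_i := ∑_{x∈O_i} μ(x) > 0 for all i, and let (q_i) be strictly positive reals summing to 1. For each i let μ_i be the conditional distribution of μ on O_i, and let σ_i be probability mass functions supported in O_i that are absolutely continuous with respect to μ_i; set σ = ∑_i q_i σ_i. Then the squared Hellinger distance D₂(σ‖μ) is minimal over all such choices (σ_i) if and only if σ_i = μ_i for all i. -/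
open Finset

/-! On the block `O i` the mixture `∑ j, q j • σ j` is just `q i • σ i`, so the affinity
`∑ x, √(σ x μ x)` splits as `∑ i, √(q i p i) · ∑ x ∈ O i, √(σ i x · μ i x)`. Each inner sum is
the Bhattacharyya coefficient of two probability vectors on `O i`; by AM–GM, `√(ab) ≤ (a + b) / 2`,
it is at most `1`, with equality exactly when `σ i = μ i`. Hence `D₂(σ‖μ) ≥ 1 - ∑ i, √(q i p i)`,
with equality if and only if `σ i = μ i` for every `i`. -/

theorem Real.sqrt_mul_le_add_div_two {a b : ℝ} (ha : 0 ≤ a) (hb : 0 ≤ b) :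
    √(a * b) ≤ (a + b) / 2 := by
  rw [Real.sqrt_mul ha]
  nlinarith [sq_nonneg (√a - √b), Real.sq_sqrt ha, Real.sq_sqrt hb]

theorem Real.sqrt_mul_eq_add_div_two_iff {a b : ℝ} (ha : 0 ≤ a) (hb : 0 ≤ b) :
    √(a * b) = (a + b) / 2 ↔ a = b := by
  refine ⟨fun h => ?_, fun h => by rw [h, Real.sqrt_mul_self hb]; ring⟩
  have hsq := Real.sq_sqrt (mul_nonneg ha hb)
  rw [h] at hsq
  nlinarith [sq_nonneg (a - b)]

section Bhattacharyya

variable {X : Type*} {s : Finset X} {a b : X → ℝ}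

theorem Finset.sum_sqrt_mul_le_add_div_two (ha : ∀ x ∈ s, 0 ≤ a x) (hb : ∀ x ∈ s, 0 ≤ b x) :
    ∑ x ∈ s, √(a x * b x) ≤ (∑ x ∈ s, a x + ∑ x ∈ s, b x) / 2 := by
  rw [← sum_add_distrib, sum_div]
  exact sum_le_sum fun x hx => Real.sqrt_mul_le_add_div_two (ha x hx) (hb x hx)

theorem Finset.sum_sqrt_mul_eq_add_div_two_iff (ha : ∀ x ∈ s, 0 ≤ a x)
    (hb : ∀ x ∈ s, 0 ≤ b x) :
    ∑ x ∈ s, √(a x * b x) = (∑ x ∈ s, a x + ∑ x ∈ s, b x) / 2 ↔ ∀ x ∈ s, a x = b x := by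
  rw [← sum_add_distrib, sum_div,
    sum_eq_sum_iff_of_le fun x hx => Real.sqrt_mul_le_add_div_two (ha x hx) (hb x hx)]
  exact forall₂_congr fun x hx => Real.sqrt_mul_eq_add_div_two_iff (ha x hx) (hb x hx)

variable {μ : X → ℝ} {c : ℝ}

theorem Finset.sum_sqrt_mul_div_le_one (ha0 : ∀ x ∈ s, 0 ≤ a x) (ha1 : ∑ x ∈ s, a x = 1)
    (hμ0 : ∀ x ∈ s, 0 ≤ μ x) (hc : ∑ x ∈ s, μ x = c) (hc0 : 0 < c) :
    ∑ x ∈ s, √(a x * (μ x / c)) ≤ 1 := by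
  have h := sum_sqrt_mul_le_add_div_two ha0 fun x hx => div_nonneg (hμ0 x hx) hc0.le
  rwa [ha1, ← sum_div, hc, div_self hc0.ne', one_add_one_eq_two, div_self two_ne_zero] at h

theorem Finset.sum_sqrt_mul_div_eq_one_iff (ha0 : ∀ x ∈ s, 0 ≤ a x) (ha1 : ∑ x ∈ s, a x = 1)
    (hμ0 : ∀ x ∈ s, 0 ≤ μ x) (hc : ∑ x ∈ s, μ x = c) (hc0 : 0 < c) :
    ∑ x ∈ s, √(a x * (μ x / c)) = 1 ↔ ∀ x ∈ s, a x = μ x / c := by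
  have h := sum_sqrt_mul_eq_add_div_two_iff ha0 fun x hx => div_nonneg (hμ0 x hx) hc0.le
  rwa [ha1, ← sum_div, hc, div_self hc0.ne', one_add_one_eq_two, div_self two_ne_zero] at h

theorem Finset.sum_eq_one_of_support_subset [Fintype X] (h1 : ∑ x, a x = 1)
    (hs : ∀ x ∉ s, a x = 0) : ∑ x ∈ s, a x = 1 := by
  rwa [sum_subset (subset_univ s) fun x _ hx => hs x hx]

end Bhattacharyya

open Function

section Partition

variable {X ι : Type*} [Fintype ι] {O : ι → Finset X}

theorem Finset.sum_mul_apply_eq_of_mem_partition (hdisj : Pairwise (Disjoint on O))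
    {τ : ι → X → ℝ} (hτ : ∀ i, ∀ x ∉ O i, τ i x = 0) (q : ι → ℝ) {i : ι} {x : X}
    (hx : x ∈ O i) : ∑ j, q j * τ j x = q i * τ i x := by
  refine sum_eq_single i (fun j _ hji => ?_) (by simp)
  rw [hτ j x (disjoint_left.mp (hdisj hji.symm) hx), mul_zero]

variable [Fintype X]

theorem Finset.sum_univ_eq_sum_sum_of_partition (hcover : ∀ x, ∃ i, x ∈ O i)
    (hdisj : Pairwise (Disjoint on O)) (f : X → ℝ) :
    ∑ x, f x = ∑ i, ∑ x ∈ O i, f x := by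
  have hdisj' : ((univ : Finset ι) : Set ι).PairwiseDisjoint O := fun i _ j _ hij => hdisj hij
  have hO : (univ : Finset ι).disjiUnion O hdisj' = univ :=
    eq_univ_of_forall fun x => mem_disjiUnion.mpr (by simpa using hcover x)
  rw [← sum_disjiUnion univ O hdisj', hO]

variable {μ : X → ℝ} {p q : ι → ℝ} {τ : ι → X → ℝ}

theorem D2_mixture_eq (hcover : ∀ x, ∃ i, x ∈ O i) (hdisj : Pairwise (Disjoint on O))
    (hppos : ∀ i, 0 < p i) (hq : ∀ i, 0 ≤ q i) (hτ : ∀ i, ∀ x ∉ O i, τ i x = 0) :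
    D2 (fun x => ∑ i, q i * τ i x) μ
      = 1 - ∑ i, √(q i * p i) * ∑ x ∈ O i, √(τ i x * (μ x / p i)) := by
  rw [D2, sum_univ_eq_sum_sum_of_partition hcover hdisj]
  congr 1
  refine sum_congr rfl fun i _ => ?_
  rw [mul_sum]
  refine sum_congr rfl fun x hx => ?_
  rw [sum_mul_apply_eq_of_mem_partition hdisj hτ q hx,
    ← Real.sqrt_mul (mul_nonneg (hq i) (hppos i).le)]
  congr 1
  field_simp [(hppos i).ne']

theorem D2_mixture_ge (hcover : ∀ x, ∃ i, x ∈ O i) (hdisj : Pairwise (Disjoint on O))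
    (hμ0 : ∀ x, 0 ≤ μ x) (hp : ∀ i, p i = ∑ x ∈ O i, μ x) (hppos : ∀ i, 0 < p i)
    (hq : ∀ i, 0 ≤ q i) (hτ0 : ∀ i x, 0 ≤ τ i x) (hτ1 : ∀ i, ∑ x, τ i x = 1)
    (hτ : ∀ i, ∀ x ∉ O i, τ i x = 0) :
    1 - ∑ i, √(q i * p i) ≤ D2 (fun x => ∑ i, q i * τ i x) μ := by
  rw [D2_mixture_eq hcover hdisj hppos hq hτ]
  refine sub_le_sub_left (sum_le_sum fun i _ => mul_le_of_le_one_right (Real.sqrt_nonneg _) ?_) 1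
  exact sum_sqrt_mul_div_le_one (fun x _ => hτ0 i x) (sum_eq_one_of_support_subset (hτ1 i) (hτ i))
    (fun x _ => hμ0 x) (hp i).symm (hppos i)

theorem D2_mixture_eq_iff (hcover : ∀ x, ∃ i, x ∈ O i) (hdisj : Pairwise (Disjoint on O))
    (hμ0 : ∀ x, 0 ≤ μ x) (hp : ∀ i, p i = ∑ x ∈ O i, μ x) (hppos : ∀ i, 0 < p i)
    (hq : ∀ i, 0 < q i) (hτ0 : ∀ i x, 0 ≤ τ i x) (hτ1 : ∀ i, ∑ x, τ i x = 1)
    (hτ : ∀ i, ∀ x ∉ O i, τ i x = 0) :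
    D2 (fun x => ∑ i, q i * τ i x) μ = 1 - ∑ i, √(q i * p i) ↔
      ∀ i, ∀ x ∈ O i, τ i x = μ x / p i := by
  have hτO i := sum_eq_one_of_support_subset (hτ1 i) (hτ i)
  have hblock i := sum_sqrt_mul_div_eq_one_iff (fun x _ => hτ0 i x) (hτO i) (fun x _ => hμ0 x)
    (hp i).symm (hppos i)
  have hblock_le i := sum_sqrt_mul_div_le_one (fun x _ => hτ0 i x) (hτO i) (fun x _ => hμ0 x)
    (hp i).symm (hppos i)
  rw [D2_mixture_eq hcover hdisj hppos (fun i => (hq i).le) hτ, sub_right_inj,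
    sum_eq_sum_iff_of_le fun i _ => mul_le_of_le_one_right (Real.sqrt_nonneg _) (hblock_le i)]
  simp only [mem_univ, forall_const]
  refine forall_congr' fun i => ?_
  rw [← hblock i, mul_eq_left₀ (Real.sqrt_pos.mpr (mul_pos (hq i) (hppos i))).ne']

end Partition

theorem hellinger_min_iff_general {X : Type*} [Fintype X] [DecidableEq X] {n : ℕ}
    (O : Fin n → Finset X)
    (hcover : ∀ x : X, ∃ i, x ∈ O i)
    (hdisj : ∀ i j, i ≠ j → Disjoint (O i) (O j))
    (μ : X → ℝ) (hμ0 : ∀ x, 0 ≤ μ x)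
    (p : Fin n → ℝ) (hp : ∀ i, p i = ∑ x ∈ O i, μ x) (hppos : ∀ i, 0 < p i)
    (q : Fin n → ℝ) (hq : ∀ i, 0 < q i)
    (μc : Fin n → X → ℝ)
    (hμc : ∀ i x, μc i x = if x ∈ O i then μ x / p i else 0)
    (σc : Fin n → X → ℝ)
    (hσ0 : ∀ i x, 0 ≤ σc i x) (hσ1 : ∀ i, ∑ x, σc i x = 1)
    (hσsupp : ∀ i, ∀ x ∉ O i, σc i x = 0) :
    (∀ τ : Fin n → X → ℝ,
        (∀ i x, 0 ≤ τ i x) → (∀ i, ∑ x, τ i x = 1) →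
        (∀ i, ∀ x ∉ O i, τ i x = 0) → (∀ i x, μ x = 0 → τ i x = 0) →
        D2 (fun x => ∑ i, q i * σc i x) μ ≤ D2 (fun x => ∑ i, q i * τ i x) μ)
      ↔ (∀ i, σc i = μc i) := by
  have hdisj' : Pairwise (Disjoint on O) := fun i j hij => hdisj i j hij
  have hμc0 i x : 0 ≤ μc i x := by
    rw [hμc]; split_ifs
    exacts [div_nonneg (hμ0 x) (hppos i).le, le_rfl]
  have hμc1 i : ∑ x, μc i x = 1 := by
    simp only [hμc]
    rw [sum_ite_mem, univ_inter, ← sum_div, ← hp, div_self (hppos i).ne']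
  have hμc_out i x (hx : x ∉ O i) : μc i x = 0 := by rw [hμc, if_neg hx]
  have hμc_ac i x (hx : μ x = 0) : μc i x = 0 := by rw [hμc, hx, zero_div, ite_self]
  have hμc_min := (D2_mixture_eq_iff hcover hdisj' hμ0 hp hppos hq hμc0 hμc1 hμc_out).mpr
    fun i x hx => by rw [hμc, if_pos hx]
  constructor
  · intro hmin i
    have hσ_min := le_antisymm ((hmin μc hμc0 hμc1 hμc_out hμc_ac).trans_eq hμc_min)
      (D2_mixture_ge hcover hdisj' hμ0 hp hppos (fun i => (hq i).le) hσ0 hσ1 hσsupp)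
    ext x
    by_cases hx : x ∈ O i
    · rw [hμc, if_pos hx]
      exact (D2_mixture_eq_iff hcover hdisj' hμ0 hp hppos hq hσ0 hσ1 hσsupp).mp hσ_min i x hx
    · rw [hμc_out i x hx, hσsupp i x hx]
  · intro hσ τ hτ0 hτ1 hτ _
    rw [funext hσ, hμc_min]
    exact D2_mixture_ge hcover hdisj' hμ0 hp hppos (fun i => (hq i).le) hτ0 hτ1 hτ

theorem hellinger_min_iff {X : Type*} [Fintype X] [DecidableEq X] {n : ℕ}
    (O : Fin n → Finset X)
    (hcover : ∀ x : X, ∃ i, x ∈ O i)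
    (hdisj : ∀ i j, i ≠ j → Disjoint (O i) (O j))
    (hOne : ∀ i, (O i).Nonempty)
    (μ : X → ℝ) (hμ0 : ∀ x, 0 ≤ μ x) (hμ1 : ∑ x, μ x = 1)
    (p : Fin n → ℝ) (hp : ∀ i, p i = ∑ x ∈ O i, μ x) (hppos : ∀ i, 0 < p i)
    (q : Fin n → ℝ) (hq : ∀ i, 0 < q i) (hq1 : ∑ i, q i = 1)
    (μc : Fin n → X → ℝ)
    (hμc : ∀ i x, μc i x = if x ∈ O i then μ x / p i else 0)
    (σc : Fin n → X → ℝ)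
    (hσ0 : ∀ i x, 0 ≤ σc i x) (hσ1 : ∀ i, ∑ x, σc i x = 1)
    (hσsupp : ∀ i, ∀ x ∉ O i, σc i x = 0)
    (hσac : ∀ i x, μ x = 0 → σc i x = 0) :
    (∀ τ : Fin n → X → ℝ,
        (∀ i x, 0 ≤ τ i x) → (∀ i, ∑ x, τ i x = 1) →
        (∀ i, ∀ x ∉ O i, τ i x = 0) → (∀ i x, μ x = 0 → τ i x = 0) →
        D2 (fun x => ∑ i, q i * σc i x) μ ≤ D2 (fun x => ∑ i, q i * τ i x) μ)
      ↔ (∀ i, σc i = μc i) :=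
  hellinger_min_iff_general O hcover hdisj μ hμ0 p hp hppos q hq μc hμc σc hσ0 hσ1 hσsupp
end

section
/- Let (O_i)_{i=1}^n be a partition of a finite set X, μ a probability mass function with p_i := ∑_{x∈O_i} μ(x) > 0, (q_i) strictly positive reals summing to 1 satisfying q_i ≥ p_i·(1 − |O_i|·μ_i(x)) for all x ∈ O_i. Set ν := ∑_i q_i ν_i where ν_i := (1 − p_i/q_i)·ρ_i + (p_i/q_i)·μ_i. Then for every family (σ_i) of probability mass functions with σ_i supported in O_i and σ := ∑_i q_i σ_i, the quadratic Bregman divergence satisfies the Pythagorean relation D(σ‖μ) = D(ν‖μ) + ∑_{i=1}^n q_i² · D(σ_i‖ν_i). -/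
open Finset

theorem bregman_pythagorean_partition {X : Type*} [Fintype X] [DecidableEq X] {n : ℕ}
    (O : Fin n → Finset X)
    (hcover : ∀ x : X, ∃ i, x ∈ O i)
    (hdisj : ∀ i j, i ≠ j → Disjoint (O i) (O j))
    (hOne : ∀ i, (O i).Nonempty)
    (μ : X → ℝ) (hμ0 : ∀ x, 0 ≤ μ x) (hμ1 : ∑ x, μ x = 1)
    (p : Fin n → ℝ) (hp : ∀ i, p i = ∑ x ∈ O i, μ x) (hppos : ∀ i, 0 < p i)
    (q : Fin n → ℝ) (hq : ∀ i, 0 < q i) (hq1 : ∑ i, q i = 1)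
    (μc ρ νc : Fin n → X → ℝ)
    (hμc : ∀ i x, μc i x = if x ∈ O i then μ x / p i else 0)
    (hρ : ∀ i x, ρ i x = if x ∈ O i then 1 / ((O i).card : ℝ) else 0)
    (hbound : ∀ i, ∀ x ∈ O i, q i ≥ p i * (1 - ((O i).card : ℝ) * μc i x))
    (hνc : ∀ i x, νc i x = (1 - p i / q i) * ρ i x + (p i / q i) * μc i x)
    (σc : Fin n → X → ℝ)
    (hσ0 : ∀ i x, 0 ≤ σc i x) (hσ1 : ∀ i, ∑ x, σc i x = 1)
    (hσsupp : ∀ i, ∀ x ∉ O i, σc i x = 0) :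
    Breg (fun x => ∑ i, q i * σc i x) μ
      = Breg (fun x => ∑ i, q i * νc i x) μ
        + ∑ i, (q i)^2 * Breg (σc i) (νc i) := by
  classical
  have hcard : ∀ i, ((O i).card : ℝ) ≠ 0 := fun i => by
    exact_mod_cast Finset.card_ne_zero_of_mem (hOne i).choose_spec
  have hqne : ∀ i, q i ≠ 0 := fun i => (hq i).ne'
  have hpne : ∀ i, p i ≠ 0 := fun i => (hppos i).ne'
  have hmem_eq : ∀ i j x, x ∈ O i → x ∈ O j → i = j := by
    intro i j x hi hj
    by_contra h
    exact Finset.disjoint_left.mp (hdisj i j h) hi hj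
  have hνsupp : ∀ i, ∀ x ∉ O i, νc i x = 0 := by
    intro i x hx; simp [hνc, hρ, hμc, hx]
  -- split sums over X into sums over the blocks
  have hsplit : ∀ f : X → ℝ, ∑ x, f x = ∑ i, ∑ x ∈ O i, f x := by
    intro f
    have huniv : (Finset.univ : Finset X) = Finset.univ.biUnion O := by
      ext x; simpa using hcover x
    rw [huniv, Finset.sum_biUnion]
    intro i _ j _ hij
    exact hdisj i j hij
  -- pointwise values on a block
  have hσpt : ∀ i, ∀ x ∈ O i, ∑ j, q j * σc j x = q i * σc i x := by
    intro i x hx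
    refine Finset.sum_eq_single i (fun j _ hj => ?_) (by simp)
    have : x ∉ O j := fun hxj => hj (hmem_eq j i x hxj hx)
    simp [hσsupp j x this]
  have hνpt : ∀ i, ∀ x ∈ O i, ∑ j, q j * νc j x = q i * νc i x := by
    intro i x hx
    refine Finset.sum_eq_single i (fun j _ hj => ?_) (by simp)
    have : x ∉ O j := fun hxj => hj (hmem_eq j i x hxj hx)
    simp [hνsupp j x this]
  have hνμ : ∀ i, ∀ x ∈ O i, q i * νc i x - μ x = (q i - p i) / ((O i).card : ℝ) := by
    intro i x hx
    rw [hνc, hρ, hμc]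
    simp only [hx, if_true]
    field_simp [hqne i, hpne i, hcard i]
    ring
  have hσsum : ∀ i, ∑ x ∈ O i, σc i x = 1 := by
    intro i
    rw [← hσ1 i]
    exact Finset.sum_subset (Finset.subset_univ _) (fun x _ hx => hσsupp i x hx)
  have hμcsum : ∀ i, ∑ x ∈ O i, μc i x = 1 := by
    intro i
    have : ∑ x ∈ O i, μc i x = (∑ x ∈ O i, μ x) / p i := by
      rw [Finset.sum_div]
      exact Finset.sum_congr rfl fun x hx => by rw [hμc]; simp [hx]
    rw [this, ← hp i, div_self (hpne i)]
  have hρsum : ∀ i, ∑ x ∈ O i, ρ i x = 1 := by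
    intro i
    have : ∑ x ∈ O i, ρ i x = ∑ x ∈ O i, 1 / ((O i).card : ℝ) :=
      Finset.sum_congr rfl fun x hx => by rw [hρ]; simp [hx]
    rw [this, Finset.sum_const, nsmul_eq_mul]
    field_simp
  have hνsum : ∀ i, ∑ x ∈ O i, νc i x = 1 := by
    intro i
    have : ∑ x ∈ O i, νc i x
        = (1 - p i / q i) * ∑ x ∈ O i, ρ i x + (p i / q i) * ∑ x ∈ O i, μc i x := by
      rw [Finset.mul_sum, Finset.mul_sum, ← Finset.sum_add_distrib]
      exact Finset.sum_congr rfl fun x _ => hνc i x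
    rw [this, hρsum, hμcsum]; ring
  -- the per-block identity
  have key : ∀ i, ∑ x ∈ O i, (q i * σc i x - μ x)^2
      = ∑ x ∈ O i, (q i * νc i x - μ x)^2 + (q i)^2 * ∑ x ∈ O i, (σc i x - νc i x)^2 := by
    intro i
    set c := (q i - p i) / ((O i).card : ℝ) with hc
    have h1 : ∀ x ∈ O i, (q i * σc i x - μ x)^2
        = (q i)^2 * (σc i x - νc i x)^2 + 2 * q i * c * (σc i x - νc i x) + c^2 := by
      intro x hx
      have h := hνμ i x hx
      have hμx : μ x = q i * νc i x - c := by linarith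
      rw [hμx]; ring
    have h2 : ∀ x ∈ O i, (q i * νc i x - μ x)^2 = c^2 := by
      intro x hx; rw [hνμ i x hx]
    rw [Finset.sum_congr rfl h1, Finset.sum_congr rfl h2,
      Finset.sum_add_distrib, Finset.sum_add_distrib]
    have hz : ∑ x ∈ O i, 2 * q i * c * (σc i x - νc i x) = 0 := by
      rw [← Finset.mul_sum, Finset.sum_sub_distrib, hσsum i, hνsum i]; ring
    rw [hz, ← Finset.mul_sum]
    ring
  -- restrict the block-Breg sums to O i
  have hBreg : ∀ i : Fin n, ∑ x : X, (σc i x - νc i x)^2 = ∑ x ∈ O i, (σc i x - νc i x)^2 := by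
    intro i
    exact (Finset.sum_subset (Finset.subset_univ _)
      (fun x _ hx => by rw [hσsupp i x hx, hνsupp i x hx]; ring)).symm
  unfold Breg
  rw [hsplit fun x => ((∑ i, q i * σc i x) - μ x)^2,
    hsplit fun x => ((∑ i, q i * νc i x) - μ x)^2]
  have hL : ∀ i, ∑ x ∈ O i, ((∑ j, q j * σc j x) - μ x)^2
      = ∑ x ∈ O i, (q i * σc i x - μ x)^2 :=
    fun i => Finset.sum_congr rfl fun x hx => by rw [hσpt i x hx]
  have hR : ∀ i, ∑ x ∈ O i, ((∑ j, q j * νc j x) - μ x)^2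
      = ∑ x ∈ O i, (q i * νc i x - μ x)^2 :=
    fun i => Finset.sum_congr rfl fun x hx => by rw [hνpt i x hx]
  rw [Finset.sum_congr rfl (fun i _ => hL i), Finset.sum_congr rfl (fun i _ => hR i),
    Finset.sum_congr rfl (fun i _ => key i)]
  simp only [hBreg]
  rw [Finset.sum_add_distrib, mul_add, Finset.mul_sum]
  congr 1
  rw [Finset.mul_sum]
  exact Finset.sum_congr rfl fun i _ => by ring
end

section
/- Under the hypotheses of the Bregman Pythagorean relation (partition (O_i) of finite X, μ with p_i > 0, positive weights q_i summing to 1, q_i ≥ p_i(1 − |O_i|μ_i(x)) on O_i, ν = ∑ q_i ν_i with ν_i = (1−p_i/q_i)ρ_i + (p_i/q_i)μ_i), the quadratic Bregman divergence D(σ‖μ) over all σ = ∑_i q_i σ_i with σ_i probability mass functions supported in O_i is minimized exactly at σ = ν; that is, D(σ‖μ) ≥ D(ν‖μ) with equality if and only if σ_i = ν_i for all i. -/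
open Finset

theorem bregman_minimizer {X : Type*} [Fintype X] [DecidableEq X] {n : ℕ}
    (O : Fin n → Finset X)
    (hcover : ∀ x : X, ∃ i, x ∈ O i)
    (hdisj : ∀ i j, i ≠ j → Disjoint (O i) (O j))
    (hOne : ∀ i, (O i).Nonempty)
    (μ : X → ℝ) (hμ0 : ∀ x, 0 ≤ μ x) (hμ1 : ∑ x, μ x = 1)
    (p : Fin n → ℝ) (hp : ∀ i, p i = ∑ x ∈ O i, μ x) (hppos : ∀ i, 0 < p i)
    (q : Fin n → ℝ) (hq : ∀ i, 0 < q i) (hq1 : ∑ i, q i = 1)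
    (μc ρ νc : Fin n → X → ℝ)
    (hμc : ∀ i x, μc i x = if x ∈ O i then μ x / p i else 0)
    (hρ : ∀ i x, ρ i x = if x ∈ O i then 1 / ((O i).card : ℝ) else 0)
    (hbound : ∀ i, ∀ x ∈ O i, q i ≥ p i * (1 - ((O i).card : ℝ) * μc i x))
    (hνc : ∀ i x, νc i x = (1 - p i / q i) * ρ i x + (p i / q i) * μc i x)
    (σc : Fin n → X → ℝ)
    (hσ0 : ∀ i x, 0 ≤ σc i x) (hσ1 : ∀ i, ∑ x, σc i x = 1)
    (hσsupp : ∀ i, ∀ x ∉ O i, σc i x = 0) :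
    Breg (fun x => ∑ i, q i * σc i x) μ ≥ Breg (fun x => ∑ i, q i * νc i x) μ
    ∧ (Breg (fun x => ∑ i, q i * σc i x) μ = Breg (fun x => ∑ i, q i * νc i x) μ
        ↔ ∀ i, σc i = νc i) := by
  set σ : X → ℝ := fun x => ∑ i, q i * σc i x with hσdef
  set ν : X → ℝ := fun x => ∑ i, q i * νc i x with hνdef
  have hcard : ∀ i, (0:ℝ) < (O i).card := fun i => by
    exact_mod_cast Finset.card_pos.mpr (hOne i)
  have hνzero : ∀ i x, x ∉ O i → νc i x = 0 := by
    intro i x hx; simp [hνc, hρ, hμc, hx]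
  have hnotmem : ∀ i j x, i ≠ j → x ∈ O i → x ∉ O j := by
    intro i j x hij hx hxj
    exact (Finset.disjoint_left.mp (hdisj i j hij) hx) hxj
  have hsingleσ : ∀ i x, x ∈ O i → σ x = q i * σc i x := by
    intro i x hx
    apply Finset.sum_eq_single
    · intro j _ hji
      rw [hσsupp j x (hnotmem i j x (fun h => hji h.symm) hx), mul_zero]
    · intro h; exact absurd (Finset.mem_univ i) h
  have hsingleν : ∀ i x, x ∈ O i → ν x = q i * νc i x := by
    intro i x hx
    apply Finset.sum_eq_single
    · intro j _ hji
      rw [hνzero j x (hnotmem i j x (fun h => hji h.symm) hx), mul_zero]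
    · intro h; exact absurd (Finset.mem_univ i) h
  have hρsum : ∀ i, ∑ x ∈ O i, ρ i x = 1 := by
    intro i
    rw [Finset.sum_congr rfl (fun x hx => by rw [hρ, if_pos hx]), Finset.sum_const,
      nsmul_eq_mul]
    field_simp
  have hμcsum : ∀ i, ∑ x ∈ O i, μc i x = 1 := by
    intro i
    rw [Finset.sum_congr rfl (fun x hx => by rw [hμc, if_pos hx]), ← Finset.sum_div,
      ← hp i, div_self (hppos i).ne']
  have hνsum : ∀ i, ∑ x ∈ O i, νc i x = 1 := by
    intro i
    simp only [hνc]
    rw [Finset.sum_add_distrib, ← Finset.mul_sum, ← Finset.mul_sum, hρsum, hμcsum]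
    ring
  have hσcsum : ∀ i, ∑ x ∈ O i, σc i x = 1 := by
    intro i
    rw [← hσ1 i]
    exact Finset.sum_subset (Finset.subset_univ _) (fun x _ hx => hσsupp i x hx)
  have hνμ : ∀ i, ∀ x ∈ O i, ν x - μ x = (q i - p i) / ((O i).card : ℝ) := by
    intro i x hx
    rw [hsingleν i x hx, hνc, hρ, hμc, if_pos hx, if_pos hx]
    field_simp [(hq i).ne', (hppos i).ne', (hcard i).ne']
    ring
  have huniv : (Finset.univ : Finset X) = Finset.univ.biUnion O := by
    ext x; simpa using hcover x
  have hpart : ∀ f : X → ℝ, ∑ x, f x = ∑ i, ∑ x ∈ O i, f x := by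
    intro f
    rw [huniv]
    exact Finset.sum_biUnion (fun i _ j _ hij => hdisj i j hij)
  have hcross : ∑ x, (σ x - ν x) * (ν x - μ x) = 0 := by
    rw [hpart]
    apply Finset.sum_eq_zero
    intro i _
    have h1 : ∑ x ∈ O i, (σ x - ν x) * (ν x - μ x)
        = ((q i - p i) / ((O i).card : ℝ)) * ∑ x ∈ O i, (σ x - ν x) := by
      rw [Finset.mul_sum]
      refine Finset.sum_congr rfl fun x hx => ?_
      rw [hνμ i x hx]; ring
    have h2 : ∑ x ∈ O i, σ x = q i := by
      rw [Finset.sum_congr rfl (fun x hx => hsingleσ i x hx), ← Finset.mul_sum,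
        hσcsum i, mul_one]
    have h3 : ∑ x ∈ O i, ν x = q i := by
      rw [Finset.sum_congr rfl (fun x hx => hsingleν i x hx), ← Finset.mul_sum,
        hνsum i, mul_one]
    rw [h1, Finset.sum_sub_distrib, h2, h3]
    ring
  have hdecomp : Breg σ μ = Breg ν μ + (1/2) * ∑ x, (σ x - ν x)^2 := by
    unfold Breg
    have hpt : ∀ x, (σ x - μ x)^2
        = ((ν x - μ x)^2 + (σ x - ν x)^2) + 2 * ((σ x - ν x) * (ν x - μ x)) := by
      intro x; ring
    rw [Finset.sum_congr rfl (fun x _ => hpt x), Finset.sum_add_distrib,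
      Finset.sum_add_distrib, ← Finset.mul_sum, hcross]
    ring
  have hsq : (0:ℝ) ≤ ∑ x, (σ x - ν x)^2 :=
    Finset.sum_nonneg fun x _ => sq_nonneg _
  refine ⟨by rw [hdecomp]; linarith, ?_, ?_⟩
  · intro heq
    have hz : ∑ x, (σ x - ν x)^2 = 0 := by
      rw [hdecomp] at heq; linarith
    have hzz : ∀ x, σ x = ν x := by
      intro x
      have h0 := (Finset.sum_eq_zero_iff_of_nonneg
        (fun x _ => sq_nonneg (σ x - ν x))).mp hz x (Finset.mem_univ x)
      have := pow_eq_zero_iff (two_ne_zero) |>.mp h0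
      linarith
    intro i
    funext x
    by_cases hx : x ∈ O i
    · have h := hzz x
      rw [hsingleσ i x hx, hsingleν i x hx] at h
      exact mul_left_cancel₀ (hq i).ne' h
    · rw [hσsupp i x hx, hνzero i x hx]
  · intro h
    have hz : ∀ x, σ x = ν x := by
      intro x
      exact Finset.sum_congr rfl fun i _ => by rw [h i]
    rw [hdecomp]
    have : ∑ x, (σ x - ν x)^2 = 0 :=
      Finset.sum_eq_zero fun x _ => by rw [hz x]; ring
    rw [this]; ring
end

section
/- Let μ be a probability mass function on a finite set X, B ⊆ X an event, and (O_i)_{i=1}^n a partition of X such that 0 < μ(B ∩ O_i) and μ(Bᶜ ∩ O_i) > 0 for all i. Let q_i > 0 with ∑ q_i = 1 and let c_i ∈ [0,1] satisfy q_i·c_i ≤ 1 for all i. Then there exist nonnegative a_i, b_i such that ν defined by ν(x) = ∑_i q_i·(a_i·1_{B∩O_i}(x) + b_i·1_{Bᶜ∩O_i}(x))·μ(x) is a probability mass function with ν(O_i) = q_i and ν(B∩O_i)/ν(O_i) = c_i for each i. -/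
open Finset

theorem conditional_update_exists {X : Type*} [Fintype X] [DecidableEq X] {n : ℕ}
    (O : Fin n → Finset X) (B : Finset X)
    (hcover : ∀ x : X, ∃ i, x ∈ O i)
    (hdisj : ∀ i j, i ≠ j → Disjoint (O i) (O j))
    (μ : X → ℝ) (hμ0 : ∀ x, 0 ≤ μ x) (hμ1 : ∑ x, μ x = 1)
    (hpplus : ∀ i, 0 < ∑ x ∈ B ∩ O i, μ x)
    (hpminus : ∀ i, 0 < ∑ x ∈ O i \ B, μ x)
    (q : Fin n → ℝ) (hq : ∀ i, 0 < q i) (hq1 : ∑ i, q i = 1)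
    (c : Fin n → ℝ) (hc0 : ∀ i, 0 ≤ c i) (hc1 : ∀ i, c i ≤ 1)
    (hqc : ∀ i, q i * c i ≤ 1) :
    ∃ a b : Fin n → ℝ, (∀ i, 0 ≤ a i) ∧ (∀ i, 0 ≤ b i) ∧
      (∀ x, 0 ≤ ∑ i, q i * ((if x ∈ B ∩ O i then a i else 0)
                  + (if x ∈ O i \ B then b i else 0)) * μ x) ∧
      (∑ x, ∑ i, q i * ((if x ∈ B ∩ O i then a i else 0)
                  + (if x ∈ O i \ B then b i else 0)) * μ x) = 1 ∧
      (∀ j, (∑ x ∈ O j, ∑ i, q i * ((if x ∈ B ∩ O i then a i else 0)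
                  + (if x ∈ O i \ B then b i else 0)) * μ x) = q j) ∧
      (∀ j, (∑ x ∈ B ∩ O j, ∑ i, q i * ((if x ∈ B ∩ O i then a i else 0)
                  + (if x ∈ O i \ B then b i else 0)) * μ x)
            / (∑ x ∈ O j, ∑ i, q i * ((if x ∈ B ∩ O i then a i else 0)
                  + (if x ∈ O i \ B then b i else 0)) * μ x) = c j) := by
  set pp : Fin n → ℝ := fun i => ∑ x ∈ B ∩ O i, μ x with hpp
  set pm : Fin n → ℝ := fun i => ∑ x ∈ O i \ B, μ x with hpm
  have hBsum : ∀ j : Fin n, (∑ x ∈ B ∩ O j, ∑ i, q i *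
      ((if x ∈ B ∩ O i then c i / pp i else 0)
        + (if x ∈ O i \ B then (1 - c i) / pm i else 0)) * μ x) = q j * c j := by
    intro j
    have key : ∀ x ∈ B ∩ O j, (∑ i, q i *
        ((if x ∈ B ∩ O i then c i / pp i else 0)
          + (if x ∈ O i \ B then (1 - c i) / pm i else 0)) * μ x)
        = q j * (c j / pp j) * μ x := by
      intro x hx
      have hxB := (Finset.mem_inter.mp hx).1
      have hxO := (Finset.mem_inter.mp hx).2
      have h2 : x ∉ O j \ B := fun h => (Finset.mem_sdiff.mp h).2 hxB
      rw [Finset.sum_eq_single j]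
      · rw [if_pos hx, if_neg h2]; ring
      · intro i _ hij
        have hxOi : x ∉ O i := fun h => Finset.disjoint_left.mp (hdisj i j hij) h hxO
        rw [if_neg (fun h => hxOi (Finset.mem_inter.mp h).2),
          if_neg (fun h => hxOi (Finset.mem_sdiff.mp h).1)]
        ring
      · intro h; exact absurd (Finset.mem_univ j) h
    rw [Finset.sum_congr rfl key, ← Finset.mul_sum]
    have hppj : pp j ≠ 0 := (hpplus j).ne'
    have hrfl : (∑ x ∈ B ∩ O j, μ x) = pp j := rfl
    rw [hrfl]
    field_simp
  have hMsum : ∀ j : Fin n, (∑ x ∈ O j \ B, ∑ i, q i *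
      ((if x ∈ B ∩ O i then c i / pp i else 0)
        + (if x ∈ O i \ B then (1 - c i) / pm i else 0)) * μ x) = q j * (1 - c j) := by
    intro j
    have key : ∀ x ∈ O j \ B, (∑ i, q i *
        ((if x ∈ B ∩ O i then c i / pp i else 0)
          + (if x ∈ O i \ B then (1 - c i) / pm i else 0)) * μ x)
        = q j * ((1 - c j) / pm j) * μ x := by
      intro x hx
      have hxO := (Finset.mem_sdiff.mp hx).1
      have hxB := (Finset.mem_sdiff.mp hx).2
      have h2 : x ∉ B ∩ O j := fun h => hxB (Finset.mem_inter.mp h).1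
      rw [Finset.sum_eq_single j]
      · rw [if_pos hx, if_neg h2]; ring
      · intro i _ hij
        have hxOi : x ∉ O i := fun h => Finset.disjoint_left.mp (hdisj i j hij) h hxO
        rw [if_neg (fun h => hxOi (Finset.mem_inter.mp h).2),
          if_neg (fun h => hxOi (Finset.mem_sdiff.mp h).1)]
        ring
      · intro h; exact absurd (Finset.mem_univ j) h
    rw [Finset.sum_congr rfl key, ← Finset.mul_sum]
    have hpmj : pm j ≠ 0 := (hpminus j).ne'
    have hrfl : (∑ x ∈ O j \ B, μ x) = pm j := rfl
    rw [hrfl]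
    field_simp
  have hOsum : ∀ j : Fin n, (∑ x ∈ O j, ∑ i, q i *
      ((if x ∈ B ∩ O i then c i / pp i else 0)
        + (if x ∈ O i \ B then (1 - c i) / pm i else 0)) * μ x) = q j := by
    intro j
    have hsplit : O j = (B ∩ O j) ∪ (O j \ B) := by
      ext x
      simp only [Finset.mem_inter, Finset.mem_sdiff, Finset.mem_union]
      tauto
    have hd : Disjoint (B ∩ O j) (O j \ B) := by
      simp only [Finset.disjoint_left, Finset.mem_inter, Finset.mem_sdiff]
      tauto
    rw [hsplit, Finset.sum_union hd, hBsum j, hMsum j]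
    ring
  refine ⟨fun i => c i / pp i, fun i => (1 - c i) / pm i,
    fun i => div_nonneg (hc0 i) (hpplus i).le,
    fun i => div_nonneg (by linarith [hc1 i]) (hpminus i).le, ?_, ?_, ?_, ?_⟩ <;>
    beta_reduce
  · intro x
    refine Finset.sum_nonneg fun i _ => ?_
    refine mul_nonneg (mul_nonneg (hq i).le ?_) (hμ0 x)
    refine add_nonneg ?_ ?_ <;> split
    · exact div_nonneg (hc0 i) (hpplus i).le
    · exact le_refl 0
    · exact div_nonneg (by linarith [hc1 i]) (hpminus i).le
    · exact le_refl 0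
  · have hunion : (Finset.univ : Finset X) = Finset.univ.biUnion (fun i : Fin n => O i) := by
      ext x
      simp only [Finset.mem_univ, Finset.mem_biUnion, true_iff]
      obtain ⟨i, hi⟩ := hcover x
      exact ⟨i, trivial, hi⟩
    have hpd : Set.PairwiseDisjoint (↑(Finset.univ : Finset (Fin n))) O :=
      fun i _ j _ hij => hdisj i j hij
    rw [hunion, Finset.sum_biUnion hpd]
    rw [Finset.sum_congr rfl (fun j _ => hOsum j)]
    exact hq1
  · exact hOsum
  · intro j
    rw [hBsum j, hOsum j, mul_comm, mul_div_assoc]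
    rw [div_self (hq j).ne', mul_one]
end

section
/- Let μ be a probability mass function on a finite set X, O ⊆ X nonempty with p := ∑_{x∈O} μ(x) ∈ (0,1], μ_O the conditional distribution on O, ρ_O the uniform distribution on O, and ν := p·μ_O + (1−p)·ρ_O. Then for every probability mass function σ supported in O, D(μ‖σ) ≥ D(μ‖ν) where D is the quadratic Bregman divergence, with equality if and only if σ = ν. -/
/-
The quadratic divergence is half a squared Euclidean distance, so this is a Pythagorean
statement: σ and ν both lie in the affine subspace of functions supported on O with total mass 1,
and μ - ν is constant on O, hence orthogonal to that subspace. Thus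
D(μ‖σ) = D(μ‖ν) + D(σ‖ν), and D(σ‖ν) ≥ 0 with equality exactly when σ = ν.
-/

open Finset

section Breg

variable {X : Type*} [Fintype X]

theorem Breg_nonneg (a b : X → ℝ) : 0 ≤ Breg a b := by
  unfold Breg
  positivity

theorem Breg_eq_zero_iff {a b : X → ℝ} : Breg a b = 0 ↔ a = b := by
  rw [Breg, mul_eq_zero, or_iff_right (by norm_num),
    Fintype.sum_eq_zero_iff_of_nonneg fun x => sq_nonneg (a x - b x)]
  simp only [funext_iff, Pi.zero_apply, sq_eq_zero_iff, sub_eq_zero]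

theorem Breg_eq_add_of_sum_mul_eq_zero {a b c : X → ℝ}
    (h : ∑ x, (a x - b x) * (b x - c x) = 0) : Breg a c = Breg a b + Breg c b := by
  have hsplit : ∀ x, (a x - c x)^2 = (a x - b x)^2 + (c x - b x)^2
      + 2 * ((a x - b x) * (b x - c x)) := fun x => by ring
  simp only [Breg, hsplit, sum_add_distrib, ← mul_sum, h]
  ring

end Breg

theorem sum_sub_mul_sub_eq_zero {X : Type*} [Fintype X] {a b c : X → ℝ} (O : Finset X) (k : ℝ)
    (hk : ∀ x ∈ O, a x - b x = k) (hbc : ∀ x ∉ O, b x = c x)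
    (hsum : ∑ x ∈ O, b x = ∑ x ∈ O, c x) :
    ∑ x, (a x - b x) * (b x - c x) = 0 := by
  rw [← sum_subset (subset_univ O) fun x _ hx => by rw [hbc x hx, sub_self, mul_zero]]
  rw [sum_congr rfl fun x hx => by rw [hk x hx], ← mul_sum, sum_sub_distrib, hsum, sub_self,
    mul_zero]

theorem bregman_single_min_general {X : Type*} [Fintype X] [DecidableEq X]
    (μ σ : X → ℝ) (O : Finset X) (hOne : O.Nonempty)
    (p : ℝ) (hp : p = ∑ x ∈ O, μ x) (hppos : 0 < p)
    (μO ρO ν : X → ℝ)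
    (hμO : ∀ x, μO x = if x ∈ O then μ x / p else 0)
    (hρO : ∀ x, ρO x = if x ∈ O then 1 / (O.card : ℝ) else 0)
    (hν : ∀ x, ν x = p * μO x + (1 - p) * ρO x)
    (hσ1 : ∑ x, σ x = 1)
    (hσsupp : ∀ x ∉ O, σ x = 0) :
    Breg μ σ ≥ Breg μ ν ∧ (Breg μ σ = Breg μ ν ↔ σ = ν) := by
  have hcard : (O.card : ℝ) ≠ 0 := by exact_mod_cast (card_pos.mpr hOne).ne'
  have hνO : ∀ x ∈ O, ν x = μ x + (1 - p) / O.card := fun x hx => by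
    rw [hν, hμO, hρO, if_pos hx, if_pos hx]
    field_simp
  have hνσ : ∀ x ∉ O, ν x = σ x := fun x hx => by
    rw [hν, hμO, hρO, if_neg hx, if_neg hx, hσsupp x hx]
    ring
  have hmass : ∑ x ∈ O, ν x = ∑ x ∈ O, σ x := by
    rw [sum_congr rfl hνO, sum_add_distrib, ← hp, sum_const, nsmul_eq_mul,
      sum_subset (subset_univ O) fun x _ hx => hσsupp x hx, hσ1]
    field_simp
    ring
  have hpyth : Breg μ σ = Breg μ ν + Breg σ ν :=
    Breg_eq_add_of_sum_mul_eq_zero <| sum_sub_mul_sub_eq_zero O (-((1 - p) / O.card))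
      (fun x hx => by rw [hνO x hx]; ring) hνσ hmass
  refine ⟨by linarith [Breg_nonneg σ ν], ?_⟩
  rw [hpyth, add_eq_left, Breg_eq_zero_iff]

theorem bregman_single_min {X : Type*} [Fintype X] [DecidableEq X]
    (μ σ : X → ℝ) (O : Finset X) (hOne : O.Nonempty)
    (hμ0 : ∀ x, 0 ≤ μ x) (hμ1 : ∑ x, μ x = 1)
    (p : ℝ) (hp : p = ∑ x ∈ O, μ x) (hppos : 0 < p) (hple : p ≤ 1)
    (μO ρO ν : X → ℝ)
    (hμO : ∀ x, μO x = if x ∈ O then μ x / p else 0)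
    (hρO : ∀ x, ρO x = if x ∈ O then 1 / (O.card : ℝ) else 0)
    (hν : ∀ x, ν x = p * μO x + (1 - p) * ρO x)
    (hσ0 : ∀ x, 0 ≤ σ x) (hσ1 : ∑ x, σ x = 1)
    (hσsupp : ∀ x ∉ O, σ x = 0) :
    Breg μ σ ≥ Breg μ ν ∧ (Breg μ σ = Breg μ ν ↔ σ = ν) :=
  bregman_single_min_general μ σ O hOne p hp hppos μO ρO ν hμO hρO hν hσ1 hσsupp
end

section
/- Let μ be a probability mass function on a finite set X, O ⊆ X with p := ∑_{x∈O} μ(x) > 0, μ_O the conditional distribution of μ on O, and σ any probability mass function supported in O. Then D₂(μ‖σ) ≥ D₂(μ‖μ_O), where D₂ is the squared Hellinger distance; moreover, if σ(x) = 0 whenever μ_O(x) = 0, equality holds if and only if σ = μ_O. -/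
open Finset

theorem hellinger_single_min {X : Type*} [Fintype X] [DecidableEq X]
    (μ σ : X → ℝ) (O : Finset X)
    (hμ0 : ∀ x, 0 ≤ μ x) (hμ1 : ∑ x, μ x = 1)
    (p : ℝ) (hp : p = ∑ x ∈ O, μ x) (hppos : 0 < p)
    (μO : X → ℝ)
    (hμO : ∀ x, μO x = if x ∈ O then μ x / p else 0)
    (hσ0 : ∀ x, 0 ≤ σ x) (hσ1 : ∑ x, σ x = 1)
    (hσsupp : ∀ x ∉ O, σ x = 0) :
    D2 μ σ ≥ D2 μ μO ∧
      ((∀ x, μO x = 0 → σ x = 0) → (D2 μ σ = D2 μ μO ↔ σ = μO)) := by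
  have hsp : (0:ℝ) < Real.sqrt p := Real.sqrt_pos.mpr hppos
  set T := ∑ x, Real.sqrt (μ x * σ x) with hTdef
  have hσO : ∑ x ∈ O, σ x = 1 := by
    rw [← hσ1]
    exact Finset.sum_subset (Finset.subset_univ O) (fun x _ hx => hσsupp x hx)
  have hTO : T = ∑ x ∈ O, Real.sqrt (μ x * σ x) := by
    refine (Finset.sum_subset (Finset.subset_univ O) (fun x _ hx => ?_)).symm
    rw [hσsupp x hx, mul_zero, Real.sqrt_zero]
  have hterm : ∀ x, (Real.sqrt (μ x) - Real.sqrt (p * σ x))^2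
      = μ x + p * σ x - 2 * Real.sqrt p * Real.sqrt (μ x * σ x) := by
    intro x
    have h1 : Real.sqrt (μ x) ^ 2 = μ x := Real.sq_sqrt (hμ0 x)
    have h2 : Real.sqrt (p * σ x) ^ 2 = p * σ x :=
      Real.sq_sqrt (mul_nonneg hppos.le (hσ0 x))
    have h3 : Real.sqrt (μ x) * Real.sqrt (p * σ x)
        = Real.sqrt p * Real.sqrt (μ x * σ x) := by
      rw [← Real.sqrt_mul (hμ0 x), ← Real.sqrt_mul hppos.le]
      ring_nf
    rw [sub_sq, h1, h2, mul_assoc, h3]; ring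
  have hS : ∑ x ∈ O, (Real.sqrt (μ x) - Real.sqrt (p * σ x))^2
      = 2 * p - 2 * Real.sqrt p * T := by
    calc ∑ x ∈ O, (Real.sqrt (μ x) - Real.sqrt (p * σ x))^2
        = ∑ x ∈ O, (μ x + p * σ x - 2 * Real.sqrt p * Real.sqrt (μ x * σ x)) := by
          exact Finset.sum_congr rfl (fun x _ => hterm x)
      _ = (∑ x ∈ O, μ x) + p * (∑ x ∈ O, σ x)
            - 2 * Real.sqrt p * (∑ x ∈ O, Real.sqrt (μ x * σ x)) := by
          rw [Finset.sum_sub_distrib, Finset.sum_add_distrib, ← Finset.mul_sum,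
            ← Finset.mul_sum]
      _ = 2 * p - 2 * Real.sqrt p * T := by
          rw [← hp, hσO, ← hTO]; ring
  have hSnonneg : 0 ≤ ∑ x ∈ O, (Real.sqrt (μ x) - Real.sqrt (p * σ x))^2 :=
    Finset.sum_nonneg (fun x _ => sq_nonneg _)
  have hpsq : Real.sqrt p * Real.sqrt p = p := Real.mul_self_sqrt hppos.le
  have hTle : T ≤ Real.sqrt p := by nlinarith [hS, hSnonneg]
  have hsumμO : ∑ x, Real.sqrt (μ x * μO x) = Real.sqrt p := by
    have : ∑ x, Real.sqrt (μ x * μO x) = ∑ x ∈ O, Real.sqrt (μ x * μO x) := by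
      refine (Finset.sum_subset (Finset.subset_univ O) (fun x _ hx => ?_)).symm
      rw [hμO x, if_neg hx, mul_zero, Real.sqrt_zero]
    rw [this]
    have : ∀ x ∈ O, Real.sqrt (μ x * μO x) = μ x / Real.sqrt p := by
      intro x hx
      rw [hμO x, if_pos hx]
      rw [div_eq_mul_inv, ← mul_assoc, Real.sqrt_mul (mul_nonneg (hμ0 x) (hμ0 x)),
        Real.sqrt_mul_self (hμ0 x), Real.sqrt_inv, div_eq_mul_inv]
    rw [Finset.sum_congr rfl this, ← Finset.sum_div, ← hp, Real.div_sqrt]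
  have hD2 : D2 μ μO = 1 - Real.sqrt p := by rw [D2, hsumμO]
  have hD2σ : D2 μ σ = 1 - T := rfl
  constructor
  · rw [hD2, hD2σ]; linarith
  · intro _
    constructor
    · intro heq
      have hTeq : T = Real.sqrt p := by rw [hD2, hD2σ] at heq; linarith
      have hS0 : ∑ x ∈ O, (Real.sqrt (μ x) - Real.sqrt (p * σ x))^2 = 0 := by
        rw [hS, hTeq]; nlinarith
      have hzero : ∀ x ∈ O, (Real.sqrt (μ x) - Real.sqrt (p * σ x))^2 = 0 :=
        (Finset.sum_eq_zero_iff_of_nonneg (fun x _ => sq_nonneg _)).mp hS0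
      funext x
      by_cases hx : x ∈ O
      · have h := hzero x hx
        have h' : Real.sqrt (μ x) = Real.sqrt (p * σ x) := by
          have := pow_eq_zero_iff (n := 2) (by norm_num) |>.mp h
          linarith [this]
        have : μ x = p * σ x := by
          have a1 := Real.sq_sqrt (hμ0 x)
          have a2 := Real.sq_sqrt (mul_nonneg hppos.le (hσ0 x))
          rw [← a1, ← a2, h']
        rw [hμO x, if_pos hx, this]
        field_simp
      · rw [hσsupp x hx, hμO x, if_neg hx]
    · intro h
      rw [h]
end

section
/- Let (O_i) be a partition of a finite set X, μ a probability mass function with p_i := ∑_{x∈O_i} μ(x) > 0, (q_i) positive weights summing to 1, μ_i the conditional distributions, and (σ_i) probability mass functions with σ_i supported in O_i and absolutely continuous w.r.t. μ_i. Set σ := ∑_i q_i σ_i and ν := ∑_i q_i μ_i. Then D₂(σ‖μ) − D₂(ν‖μ) = ∑_i q_i·√(p_i/q_i)·D₂(μ_i‖σ_i) ≥ 0, where D₂ is the squared Hellinger distance D₂(a‖b) = 1 − ∑_x √(a(x)b(x)). -/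
open Finset

theorem hellinger_mixture_difference {X : Type*} [Fintype X] [DecidableEq X] {n : ℕ}
    (O : Fin n → Finset X)
    (hcover : ∀ x : X, ∃ i, x ∈ O i)
    (hdisj : ∀ i j, i ≠ j → Disjoint (O i) (O j))
    (hOne : ∀ i, (O i).Nonempty)
    (μ : X → ℝ) (hμ0 : ∀ x, 0 ≤ μ x) (hμ1 : ∑ x, μ x = 1)
    (p : Fin n → ℝ) (hp : ∀ i, p i = ∑ x ∈ O i, μ x) (hppos : ∀ i, 0 < p i)
    (q : Fin n → ℝ) (hq : ∀ i, 0 < q i) (hq1 : ∑ i, q i = 1)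
    (μc : Fin n → X → ℝ)
    (hμc : ∀ i x, μc i x = if x ∈ O i then μ x / p i else 0)
    (σc : Fin n → X → ℝ)
    (hσ0 : ∀ i x, 0 ≤ σc i x) (hσ1 : ∀ i, ∑ x, σc i x = 1)
    (hσsupp : ∀ i, ∀ x ∉ O i, σc i x = 0)
    (hσac : ∀ i x, μ x = 0 → σc i x = 0) :
    D2 (fun x => ∑ i, q i * σc i x) μ - D2 (fun x => ∑ i, q i * μc i x) μ
        = ∑ i, q i * Real.sqrt (p i / q i) * D2 (μc i) (σc i)
    ∧ 0 ≤ D2 (fun x => ∑ i, q i * σc i x) μ - D2 (fun x => ∑ i, q i * μc i x) μ := by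
  classical
  have huniq : ∀ i j x, x ∈ O i → x ∈ O j → i = j := by
    intro i j x hi hj
    by_contra h
    exact Finset.disjoint_left.mp (hdisj i j h) hi hj
  have hsum : ∀ f : X → ℝ, ∑ x, f x = ∑ i, ∑ x ∈ O i, f x := by
    intro f
    rw [← Finset.sum_biUnion (by intro i _ j _ hij; exact hdisj i j hij)]
    apply Finset.sum_congr _ fun _ _ => rfl
    ext x
    simpa using (hcover x)
  set T : Fin n → ℝ := fun i => ∑ x ∈ O i, Real.sqrt (σc i x * μ x) with hT
  have hσsum : ∀ i, ∑ x ∈ O i, σc i x = 1 := by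
    intro i
    rw [← hσ1 i]
    exact Finset.sum_subset (Finset.subset_univ _) (fun x _ hx => hσsupp i x hx)
  have h1 : ∑ x, Real.sqrt ((∑ i, q i * σc i x) * μ x) = ∑ i, Real.sqrt (q i) * T i := by
    rw [hsum]
    refine Finset.sum_congr rfl fun j _ => ?_
    rw [hT, Finset.mul_sum]
    refine Finset.sum_congr rfl fun x hx => ?_
    have hpt : ∑ i, q i * σc i x = q j * σc j x := by
      apply Finset.sum_eq_single
      · intro i _ hij
        rw [hσsupp i x (fun hxi => hij (huniq i j x hxi hx)), mul_zero]
      · simp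
    rw [hpt, mul_assoc, Real.sqrt_mul (le_of_lt (hq j))]
  have h2 : ∑ x, Real.sqrt ((∑ i, q i * μc i x) * μ x)
      = ∑ i, Real.sqrt (q i) * Real.sqrt (p i) := by
    rw [hsum]
    refine Finset.sum_congr rfl fun j _ => ?_
    have hps : Real.sqrt (p j) * Real.sqrt (p j) = p j := Real.mul_self_sqrt (hppos j).le
    have hpne : Real.sqrt (p j) ≠ 0 := Real.sqrt_ne_zero'.mpr (hppos j)
    have key : ∀ x ∈ O j, Real.sqrt ((∑ i, q i * μc i x) * μ x)
        = Real.sqrt (q j) / Real.sqrt (p j) * μ x := by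
      intro x hx
      have hμcx : ∑ i, q i * μc i x = q j * (μ x / p j) := by
        rw [Finset.sum_eq_single j]
        · rw [hμc j x, if_pos hx]
        · intro i _ hij
          rw [hμc i x, if_neg (fun hxi => hij (huniq i j x hxi hx)), mul_zero]
        · simp
      rw [hμcx, show q j * (μ x / p j) * μ x = q j / p j * (μ x * μ x) by ring,
        Real.sqrt_mul (div_nonneg (hq j).le (hppos j).le), Real.sqrt_mul_self (hμ0 x),
        Real.sqrt_div (hq j).le]
    rw [Finset.sum_congr rfl key, ← Finset.mul_sum, ← hp j]
    field_simp
    linear_combination -Real.sqrt (q j) * hps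
  have h3 : ∀ i, q i * Real.sqrt (p i / q i) * D2 (μc i) (σc i)
      = Real.sqrt (q i) * Real.sqrt (p i) - Real.sqrt (q i) * T i := by
    intro i
    have hpne : Real.sqrt (p i) ≠ 0 := Real.sqrt_ne_zero'.mpr (hppos i)
    have hqne : Real.sqrt (q i) ≠ 0 := Real.sqrt_ne_zero'.mpr (hq i)
    have hqs : Real.sqrt (q i) * Real.sqrt (q i) = q i := Real.mul_self_sqrt (hq i).le
    have hqp : q i * Real.sqrt (p i / q i) = Real.sqrt (q i) * Real.sqrt (p i) := by
      rw [Real.sqrt_div (hppos i).le, ← mul_div_assoc, div_eq_iff hqne]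
      linear_combination -Real.sqrt (p i) * hqs
    have hDsum : ∑ x, Real.sqrt (μc i x * σc i x) = T i / Real.sqrt (p i) := by
      rw [← Finset.sum_subset (Finset.subset_univ (O i))
          (fun x _ hx => by rw [hσsupp i x hx, mul_zero, Real.sqrt_zero]),
        hT, Finset.sum_div]
      refine Finset.sum_congr rfl fun x hx => ?_
      rw [hμc i x, if_pos hx, show μ x / p i * σc i x = (σc i x * μ x) / p i by ring,
        Real.sqrt_div (mul_nonneg (hσ0 i x) (hμ0 x))]
    rw [D2, hDsum, hqp, mul_sub, mul_one]
    congr 1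
    field_simp
  have hTle : ∀ i, T i ≤ Real.sqrt (p i) := by
    intro i
    have hTnn : 0 ≤ T i := Finset.sum_nonneg fun x _ => Real.sqrt_nonneg _
    have hCS := Finset.sum_mul_sq_le_sq_mul_sq (O i)
      (fun x => Real.sqrt (σc i x)) (fun x => Real.sqrt (μ x))
    have e1 : ∑ x ∈ O i, Real.sqrt (σc i x) * Real.sqrt (μ x) = T i :=
      Finset.sum_congr rfl fun x _ => (Real.sqrt_mul (hσ0 i x) _).symm
    have e2 : ∑ x ∈ O i, Real.sqrt (σc i x) ^ 2 = 1 := by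
      rw [← hσsum i]
      exact Finset.sum_congr rfl fun x _ => Real.sq_sqrt (hσ0 i x)
    have e3 : ∑ x ∈ O i, Real.sqrt (μ x) ^ 2 = p i := by
      rw [hp i]
      exact Finset.sum_congr rfl fun x _ => Real.sq_sqrt (hμ0 x)
    rw [e1, e2, e3, one_mul] at hCS
    nlinarith [Real.sqrt_nonneg (p i), Real.mul_self_sqrt (hppos i).le]
  have hmain : D2 (fun x => ∑ i, q i * σc i x) μ - D2 (fun x => ∑ i, q i * μc i x) μ
      = ∑ i, q i * Real.sqrt (p i / q i) * D2 (μc i) (σc i) := by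
    rw [Finset.sum_congr rfl (fun i _ => h3 i)]
    simp only [D2]
    rw [h1, h2, Finset.sum_sub_distrib]
    ring
  refine ⟨hmain, ?_⟩
  rw [hmain]
  apply Finset.sum_nonneg
  intro i _
  rw [h3 i, ← mul_sub]
  have := hTle i
  have := Real.sqrt_nonneg (q i)
  nlinarith
end
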